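/- arXiv:1404.4702 — 2 statements merged into one kernel-verified Lean document; each statement's English description precedes it below -/
import Mathlib

section
/- Let a ≥ 1 be a real number, let n, t be integers with 0 ≤ t < n, let f: {0,1}^n → ℝ be an a-self-bounding function, and let x₀ ∈ {0,1}^n be any point. Then (n − t − a) · Σ_{x : d(x,x₀)=t} f(x) ≤ (t+1) · Σ_{x : d(x,x₀)=t+1} f(x), where d(·,·) denotes Hamming distance and the sums range over all points of {0,1}^n at the indicated Hamming distance from x₀. -/
/-!
Double counting of the edges of the cube between the Hamming spheres of radii `t` and `t + 1`
around `x₀`. A point `x` at distance `t` has `n - t` outward neighbours `x ⊕ eᵢ`, and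
self-bounding gives `∑ᵢ (f x - f (x ⊕ eᵢ)) ≤ a f x`, so the outward neighbours carry total
weight at least `(n - t - a) f x`. Summing over `x`, each point at distance `t + 1` is counted
once for each of its `t + 1` inward neighbours.
-/

noncomputable section

/-- A function `f : {0,1}^n → ℝ` is `a`-self-bounding. -/
def SelfBounding (n : ℕ) (a : ℝ) (f : (Fin n → Bool) → ℝ) : Prop :=
  ∀ x : Fin n → Bool,
    (∀ i : Fin n,
      f x - min (f (Function.update x i false)) (f (Function.update x i true)) ≤ 1) ∧
    ∑ i : Fin n,
      (f x - min (f (Function.update x i false)) (f (Function.update x i true))) ≤ a * f x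

open Finset

section HammingCube

variable {ι : Type*}

lemma card_filter_eq_add_hammingDist [Fintype ι] {β : Type*} [DecidableEq β] (x y : ι → β) :
    #{i | x i = y i} + hammingDist x y = Fintype.card ι :=
  card_filter_add_card_filter_not _

variable [DecidableEq ι]

def flipAt (x : ι → Bool) (i : ι) : ι → Bool := Function.update x i (!x i)

@[simp]
lemma flipAt_apply_self (x : ι → Bool) (i : ι) : flipAt x i i = !x i := by
  simp [flipAt]

lemma flipAt_apply_of_ne (x : ι → Bool) {i j : ι} (h : j ≠ i) : flipAt x i j = x j := by
  simp [flipAt, Function.update_of_ne h]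

@[simp]
lemma flipAt_flipAt (x : ι → Bool) (i : ι) : flipAt (flipAt x i) i = x := by
  simp [flipAt]

lemma min_update_le {α : Type*} [LinearOrder α] (f : (ι → Bool) → α) (x : ι → Bool) (i : ι)
    (b : Bool) :
    min (f (Function.update x i false)) (f (Function.update x i true)) ≤
      f (Function.update x i b) := by
  cases b
  exacts [min_le_left _ _, min_le_right _ _]

variable [Fintype ι]

lemma hammingDist_flipAt_of_eq {x x₀ : ι → Bool} {i : ι} (h : x i = x₀ i) :
    hammingDist (flipAt x i) x₀ = hammingDist x x₀ + 1 := by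
  have hdiff : univ.filter (fun j => flipAt x i j ≠ x₀ j) =
      insert i (univ.filter fun j => x j ≠ x₀ j) := by
    ext j
    rcases eq_or_ne j i with rfl | hj
    · simp [h]
    · simp [hj, flipAt_apply_of_ne x hj]
  rw [hammingDist, hammingDist, hdiff, card_insert_of_notMem (by simp [h])]

lemma hammingDist_flipAt_of_ne {x x₀ : ι → Bool} {i : ι} (h : x i ≠ x₀ i) :
    hammingDist (flipAt x i) x₀ + 1 = hammingDist x x₀ := by
  have h' : flipAt x i i = x₀ i := by
    cases hx : x i <;> cases hx₀ : x₀ i <;> simp_all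
  simpa using (hammingDist_flipAt_of_eq h').symm

def hammingSphere (x₀ : ι → Bool) (t : ℕ) : Finset (ι → Bool) := {x | hammingDist x x₀ = t}

@[simp]
lemma mem_hammingSphere {x₀ x : ι → Bool} {t : ℕ} :
    x ∈ hammingSphere x₀ t ↔ hammingDist x x₀ = t := by
  simp [hammingSphere]

lemma sum_filter_flipAt_hammingSphere {x₀ : ι → Bool} {t : ℕ} (i : ι) {M : Type*}
    [AddCommMonoid M] (g : (ι → Bool) → M) :
    ∑ x ∈ hammingSphere x₀ t with x i = x₀ i, g (flipAt x i) =
      ∑ y ∈ hammingSphere x₀ (t + 1) with y i ≠ x₀ i, g y := by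
  refine sum_nbij' (flipAt · i) (flipAt · i) ?_ ?_ (by simp) (by simp) (fun _ _ => rfl)
  · intro x hx
    simp only [mem_filter, mem_hammingSphere] at hx ⊢
    exact ⟨by rw [hammingDist_flipAt_of_eq hx.2, hx.1], by simp [hx.2]⟩
  · intro y hy
    simp only [mem_filter, mem_hammingSphere] at hy ⊢
    have hdist := hammingDist_flipAt_of_ne hy.2
    refine ⟨by omega, ?_⟩
    cases hyi : y i <;> cases hx₀ : x₀ i <;> simp_all

lemma sum_sum_flipAt_hammingSphere (x₀ : ι → Bool) (t : ℕ) {M : Type*} [AddCommMonoid M]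
    (g : (ι → Bool) → M) :
    ∑ x ∈ hammingSphere x₀ t, ∑ i with x i = x₀ i, g (flipAt x i) =
      (t + 1) • ∑ y ∈ hammingSphere x₀ (t + 1), g y := by
  calc ∑ x ∈ hammingSphere x₀ t, ∑ i with x i = x₀ i, g (flipAt x i)
      = ∑ i, ∑ x ∈ hammingSphere x₀ t with x i = x₀ i, g (flipAt x i) :=
        sum_comm' (by simp)
    _ = ∑ i, ∑ y ∈ hammingSphere x₀ (t + 1) with y i ≠ x₀ i, g y := by
        simp_rw [sum_filter_flipAt_hammingSphere]
    _ = ∑ y ∈ hammingSphere x₀ (t + 1), ∑ i with y i ≠ x₀ i, g y :=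
        sum_comm' (by simp [and_comm])
    _ = (t + 1) • ∑ y ∈ hammingSphere x₀ (t + 1), g y := by
        rw [smul_sum]
        refine sum_congr rfl fun y hy => ?_
        rw [sum_const, ← mem_hammingSphere.1 hy]
        rfl

end HammingCube

namespace SelfBounding

variable {n : ℕ} {a : ℝ} {f : (Fin n → Bool) → ℝ}

lemma sum_sub_flipAt_le (hf : SelfBounding n a f) (x : Fin n → Bool) (s : Finset (Fin n)) :
    ∑ i ∈ s, (f x - f (flipAt x i)) ≤ a * f x := by
  have hmin_le_self (i : Fin n) :
      min (f (Function.update x i false)) (f (Function.update x i true)) ≤ f x := by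
    simpa using min_update_le f x i (x i)
  calc ∑ i ∈ s, (f x - f (flipAt x i))
      ≤ ∑ i ∈ s, (f x - min (f (Function.update x i false)) (f (Function.update x i true))) :=
        sum_le_sum fun i _ => sub_le_sub_left (min_update_le f x i _) _
    _ ≤ ∑ i, (f x - min (f (Function.update x i false)) (f (Function.update x i true))) :=
        sum_le_sum_of_subset_of_nonneg (subset_univ s) fun i _ _ =>
          sub_nonneg.2 (hmin_le_self i)
    _ ≤ a * f x := (hf x).2

lemma mul_le_sum_flipAt (hf : SelfBounding n a f) (x x₀ : Fin n → Bool) :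
    ((n : ℝ) - hammingDist x x₀ - a) * f x ≤ ∑ i with x i = x₀ i, f (flipAt x i) := by
  have hcard : (#{i | x i = x₀ i} : ℝ) = n - hammingDist x x₀ := by
    rw [eq_sub_iff_add_eq, ← Nat.cast_add, card_filter_eq_add_hammingDist, Fintype.card_fin]
  have hsum := hf.sum_sub_flipAt_le x {i | x i = x₀ i}
  rw [sum_sub_distrib, sum_const, nsmul_eq_mul, hcard] at hsum
  linarith

end SelfBounding

theorem level_sum_bound_general (n t : ℕ) (a : ℝ)
    (f : (Fin n → Bool) → ℝ) (hf : SelfBounding n a f) (x₀ : Fin n → Bool) :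
    ((n : ℝ) - (t : ℝ) - a) *
        ∑ x ∈ Finset.univ.filter (fun x : Fin n → Bool => hammingDist x x₀ = t), f x ≤
      ((t : ℝ) + 1) *
        ∑ x ∈ Finset.univ.filter (fun x : Fin n → Bool => hammingDist x x₀ = t + 1), f x := by
  calc ((n : ℝ) - t - a) * ∑ x ∈ hammingSphere x₀ t, f x
      = ∑ x ∈ hammingSphere x₀ t, ((n : ℝ) - hammingDist x x₀ - a) * f x := by
        rw [mul_sum]
        exact sum_congr rfl fun x hx => by rw [mem_hammingSphere.1 hx]
    _ ≤ ∑ x ∈ hammingSphere x₀ t, ∑ i with x i = x₀ i, f (flipAt x i) :=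
        sum_le_sum fun x _ => hf.mul_le_sum_flipAt x x₀
    _ = ((t : ℝ) + 1) * ∑ y ∈ hammingSphere x₀ (t + 1), f y := by
        rw [sum_sum_flipAt_hammingSphere, nsmul_eq_mul]
        push_cast
        rfl

theorem level_sum_bound (n t : ℕ) (a : ℝ) (ha : 1 ≤ a) (ht : t < n)
    (f : (Fin n → Bool) → ℝ) (hf : SelfBounding n a f) (x₀ : Fin n → Bool) :
    ((n : ℝ) - (t : ℝ) - a) *
        ∑ x ∈ Finset.univ.filter (fun x : Fin n → Bool => hammingDist x x₀ = t), f x ≤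
      ((t : ℝ) + 1) *
        ∑ x ∈ Finset.univ.filter (fun x : Fin n → Bool => hammingDist x x₀ = t + 1), f x :=
  level_sum_bound_general n t a f hf x₀
end
end

section
/- Let a ≥ 1 be a real number, let n ≥ 4a be an integer, let f: {0,1}^n → ℝ be a nonnegative a-self-bounding function, and let ρ ∈ [0,1]. Then for every x ∈ {0,1}^n, (T_ρ f)(x) ≥ (1 − (1−ρ)/(2(1 − (a−1)/n)))^a · f(x). -/
noncomputable section

/-- The noise operator `T_ρ`: `(T_ρ f)(x) = E_{y ∼ N_ρ(x)}[f(y)]`, where each coordinate of `y`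
agrees with `x` with probability `(1+ρ)/2` independently. -/
def noiseOp (n : ℕ) (ρ : ℝ) (f : (Fin n → Bool) → ℝ) (x : Fin n → Bool) : ℝ :=
  ∑ y : Fin n → Bool,
    (∏ i : Fin n, if y i = x i then (1 + ρ) / 2 else (1 - ρ) / 2) * f y

/-!
Let `t = (1 - ρ) / 2` be the flip probability and `F(t) = T_ρ f x = ∑ y, w_t(x, y) f y`.
Differentiating in `t` and pairing each `y` with `y_i = x_i` against its flip in coordinate `i`
gives `(1 - t) F'(t) = ∑ i, ∑_{y_i = x_i} w_t(x, y) (f (flip_i y) - f y)`, and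
`f (flip_i y) - f y ≥ -D_i f y` with `D_i` the drop in coordinate `i`, so self-boundedness
yields `(1 - t) F'(t) ≥ -a F(t)`.
Hence `(1 - t)^(-a) F(t)` is nondecreasing, so `F(t) ≥ (1 - t)^a f x`; this dominates the claimed
bound since `1 - (a - 1) / n ≤ 1`.
-/

open Finset Set

theorem one_sub_rpow_mul_le_of_hasDerivAt {F F' : ℝ → ℝ} {a e : ℝ} (he0 : 0 ≤ e)
    (he1 : e < 1) (hF : ∀ t ∈ Icc 0 e, HasDerivAt F (F' t) t)
    (hF' : ∀ t ∈ Ioo 0 e, -(a * F t) ≤ (1 - t) * F' t) :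
    (1 - e) ^ a * F 0 ≤ F e := by
  have hpos : ∀ t ∈ Icc 0 e, 0 < 1 - t := fun t ht => by linarith [ht.2]
  have hG : ∀ t ∈ Icc 0 e, HasDerivAt (fun s => (1 - s) ^ (-a) * F s)
      ((1 - t) ^ (-a - 1) * (a * F t + (1 - t) * F' t)) t := by
    intro t ht
    have hpow : HasDerivAt (fun s => (1 - s) ^ (-a)) (a * (1 - t) ^ (-a - 1)) t :=
      ((Real.hasDerivAt_rpow_const (Or.inl (hpos t ht).ne')).comp t
        ((hasDerivAt_id t).const_sub 1)).congr_deriv (by simp)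
    refine (hpow.mul (hF t ht)).congr_deriv ?_
    have hsplit : (1 - t) ^ (-a) = (1 - t) ^ (-a - 1) * (1 - t) := by
      rw [← Real.rpow_add_one (hpos t ht).ne', sub_add_cancel]
    rw [hsplit]
    ring
  have hmono : MonotoneOn (fun s => (1 - s) ^ (-a) * F s) (Icc 0 e) := by
    refine monotoneOn_of_hasDerivWithinAt_nonneg (convex_Icc 0 e)
      (fun t ht => (hG t ht).continuousAt.continuousWithinAt)
      (fun t ht => (hG t (interior_subset ht)).hasDerivWithinAt) fun t ht => ?_
    rw [interior_Icc] at ht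
    exact mul_nonneg (Real.rpow_nonneg (hpos t (Ioo_subset_Icc_self ht)).le _)
      (by linarith [hF' t ht])
  have h := hmono (left_mem_Icc.2 he0) (right_mem_Icc.2 he0) he0
  simp only [sub_zero, Real.one_rpow, one_mul] at h
  have hpe : 0 < 1 - e := by linarith
  calc (1 - e) ^ a * F 0 ≤ (1 - e) ^ a * ((1 - e) ^ (-a) * F e) :=
        mul_le_mul_of_nonneg_left h (Real.rpow_nonneg hpe.le a)
    _ = F e := by rw [← mul_assoc, ← Real.rpow_add hpe, add_neg_cancel, Real.rpow_zero, one_mul]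

namespace BooleanCube

variable {ι : Type*}

section

variable [DecidableEq ι]

def flipAt (i : ι) (y : ι → Bool) : ι → Bool := Function.update y i (!y i)

@[simp]
lemma flipAt_apply_self (i : ι) (y : ι → Bool) : flipAt i y i = !y i := by
  simp [flipAt]

lemma flipAt_apply_of_ne {i j : ι} (h : j ≠ i) (y : ι → Bool) : flipAt i y j = y j :=
  Function.update_of_ne h _ _

lemma flipAt_flipAt (i : ι) (y : ι → Bool) : flipAt i (flipAt i y) = y := by
  ext j
  by_cases h : j = i
  · subst h; simp
  · simp only [flipAt_apply_of_ne h]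

def coordDrop (f : (ι → Bool) → ℝ) (i : ι) (y : ι → Bool) : ℝ :=
  f y - min (f (Function.update y i false)) (f (Function.update y i true))

lemma sub_coordDrop_le_flipAt (f : (ι → Bool) → ℝ) (i : ι) (y : ι → Bool) :
    f y - coordDrop f i y ≤ f (flipAt i y) := by
  unfold coordDrop flipAt
  cases y i <;> simp

lemma coordDrop_nonneg (f : (ι → Bool) → ℝ) (i : ι) (y : ι → Bool) :
    0 ≤ coordDrop f i y := by
  have h : min (f (Function.update y i false)) (f (Function.update y i true)) ≤
      f (Function.update y i (y i)) := by
    cases y i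
    · exact min_le_left _ _
    · exact min_le_right _ _
  rw [Function.update_eq_self] at h
  exact sub_nonneg.2 h

end

variable [Fintype ι]

def noiseWeight (t : ℝ) (x y : ι → Bool) : ℝ := ∏ i, if y i = x i then 1 - t else t

lemma noiseWeight_nonneg {t : ℝ} (ht0 : 0 ≤ t) (ht1 : t ≤ 1) (x y : ι → Bool) :
    0 ≤ noiseWeight t x y :=
  prod_nonneg fun i _ => by split <;> linarith

variable [DecidableEq ι]

/-- `noiseAvg t f x = (T_ρ f) x` for `t = (1 - ρ) / 2`: each coordinate of `x` is flipped
independently with probability `t`. -/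
def noiseAvg (t : ℝ) (f : (ι → Bool) → ℝ) (x : ι → Bool) : ℝ :=
  ∑ y, noiseWeight t x y * f y

lemma noiseAvg_zero (f : (ι → Bool) → ℝ) (x : ι → Bool) : noiseAvg 0 f x = f x := by
  rw [noiseAvg, sum_eq_single x]
  · simp [noiseWeight]
  · intro y _ hy
    obtain ⟨i, hi⟩ := Function.ne_iff.1 hy
    rw [noiseWeight, prod_eq_zero (mem_univ i) (by simp [hi]), zero_mul]
  · simp

lemma sum_eq_sum_filter_add_flipAt {M : Type*} [AddCommMonoid M] (g : (ι → Bool) → M) (i : ι)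
    (b : Bool) : ∑ y, g y = ∑ y with y i = b, (g y + g (flipAt i y)) := by
  rw [sum_add_distrib, ← sum_filter_add_sum_filter_not univ (fun y => y i = b)]
  congr 1
  refine sum_nbij' (flipAt i) (flipAt i) ?_ ?_ (fun y _ => flipAt_flipAt i y)
    (fun y _ => flipAt_flipAt i y) (fun y _ => by rw [flipAt_flipAt])
  · intro y hy
    simp only [mem_filter, flipAt_apply_self] at hy ⊢
    cases b <;> simpa using hy
  · intro y hy
    simp only [mem_filter, flipAt_apply_self] at hy ⊢
    simp [hy]

def noiseWeightErase (t : ℝ) (x y : ι → Bool) (i : ι) : ℝ :=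
  ∏ j ∈ univ.erase i, if y j = x j then 1 - t else t

def noiseAvgDeriv (t : ℝ) (f : (ι → Bool) → ℝ) (x : ι → Bool) : ℝ :=
  ∑ i, ∑ y with y i = x i, noiseWeightErase t x y i * (f (flipAt i y) - f y)

variable {t : ℝ} {x y : ι → Bool}

lemma noiseWeightErase_nonneg (ht0 : 0 ≤ t) (ht1 : t ≤ 1) (i : ι) :
    0 ≤ noiseWeightErase t x y i :=
  prod_nonneg fun j _ => by split <;> linarith

lemma noiseWeight_eq_mul_noiseWeightErase {i : ι} (h : y i = x i) :
    noiseWeight t x y = (1 - t) * noiseWeightErase t x y i := by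
  rw [noiseWeight, ← mul_prod_erase _ _ (mem_univ i), if_pos h, noiseWeightErase]

lemma noiseWeightErase_flipAt (i : ι) :
    noiseWeightErase t x (flipAt i y) i = noiseWeightErase t x y i :=
  prod_congr rfl fun j hj => by rw [flipAt_apply_of_ne (ne_of_mem_erase hj)]

lemma hasDerivAt_noiseWeight (t : ℝ) (x y : ι → Bool) :
    HasDerivAt (noiseWeight · x y)
      (∑ i, noiseWeightErase t x y i * if y i = x i then -1 else 1) t := by
  have h := HasDerivAt.fun_finsetProd (u := univ) (x := t)
    (f := fun i s => if y i = x i then 1 - s else s)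
    (f' := fun i => if y i = x i then -1 else 1) fun i _ => by
      split
      · simpa using (hasDerivAt_id t).const_sub 1
      · exact hasDerivAt_id t
  simp only [smul_eq_mul] at h
  exact h

lemma hasDerivAt_noiseAvg (t : ℝ) (f : (ι → Bool) → ℝ) (x : ι → Bool) :
    HasDerivAt (noiseAvg · f x) (noiseAvgDeriv t f x) t := by
  refine (HasDerivAt.fun_sum fun y _ =>
    (hasDerivAt_noiseWeight t x y).mul_const (f y)).congr_deriv ?_
  simp_rw [sum_mul]
  rw [sum_comm]
  refine sum_congr rfl fun i _ => ?_
  rw [sum_eq_sum_filter_add_flipAt _ i (x i)]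
  refine sum_congr rfl fun y hy => ?_
  rw [mem_filter] at hy
  simp only [hy.2, flipAt_apply_self, noiseWeightErase_flipAt, if_true, Bool.not_eq_self, if_false]
  ring

lemma neg_mul_noiseAvg_le_mul_noiseAvgDeriv (ht0 : 0 ≤ t) (ht1 : t ≤ 1) {a : ℝ}
    {f : (ι → Bool) → ℝ} (hf : ∀ y, ∑ i, coordDrop f i y ≤ a * f y) (x : ι → Bool) :
    -(a * noiseAvg t f x) ≤ (1 - t) * noiseAvgDeriv t f x := by
  calc -(a * noiseAvg t f x)
      ≤ -∑ i, ∑ y, noiseWeight t x y * coordDrop f i y := by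
        rw [neg_le_neg_iff, sum_comm, noiseAvg, mul_sum]
        gcongr with y
        rw [← mul_sum, mul_left_comm]
        exact mul_le_mul_of_nonneg_left (hf y) (noiseWeight_nonneg ht0 ht1 x y)
    _ ≤ -∑ i, ∑ y with y i = x i, noiseWeight t x y * coordDrop f i y := by
        gcongr with i
        · intro y _ _
          exact mul_nonneg (noiseWeight_nonneg ht0 ht1 x y) (coordDrop_nonneg f i y)
        · exact filter_subset _ _
    _ = ∑ i, ∑ y with y i = x i, (1 - t) * (noiseWeightErase t x y i * -coordDrop f i y) := by
        simp_rw [← sum_neg_distrib]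
        refine sum_congr rfl fun i _ => sum_congr rfl fun y hy => ?_
        rw [noiseWeight_eq_mul_noiseWeightErase (mem_filter.1 hy).2]
        ring
    _ ≤ (1 - t) * noiseAvgDeriv t f x := by
        rw [noiseAvgDeriv, mul_sum]
        gcongr with i
        rw [mul_sum]
        gcongr with y
        · exact noiseWeightErase_nonneg ht0 ht1 i
        · linarith [sub_coordDrop_le_flipAt f i y]

theorem one_sub_rpow_mul_le_noiseAvg {a e : ℝ} (he0 : 0 ≤ e) (he1 : e < 1)
    {f : (ι → Bool) → ℝ} (hf : ∀ y, ∑ i, coordDrop f i y ≤ a * f y) (x : ι → Bool) :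
    (1 - e) ^ a * f x ≤ noiseAvg e f x := by
  have h := one_sub_rpow_mul_le_of_hasDerivAt he0 he1 (fun t _ => hasDerivAt_noiseAvg t f x)
    fun t ht => neg_mul_noiseAvg_le_mul_noiseAvgDeriv ht.1.le (by linarith [ht.2]) hf x
  rwa [noiseAvg_zero] at h

end BooleanCube

open BooleanCube in
theorem noiseOp_pointwise_bound (n : ℕ) (a : ℝ) (ha : 1 ≤ a) (hn : 4 * a ≤ (n : ℝ))
    (f : (Fin n → Bool) → ℝ) (hf0 : ∀ x, 0 ≤ f x) (hf : SelfBounding n a f)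
    (ρ : ℝ) (hρ : ρ ∈ Set.Icc (0 : ℝ) 1) (x : Fin n → Bool) :
    (1 - (1 - ρ) / (2 * (1 - (a - 1) / (n : ℝ)))) ^ (a : ℝ) * f x ≤ noiseOp n ρ f x := by
  obtain ⟨hρ0, hρ1⟩ := hρ
  have hnoise : noiseOp n ρ f x = noiseAvg ((1 - ρ) / 2) f x := by
    simp only [noiseOp, noiseAvg, noiseWeight, show (1 + ρ) / 2 = 1 - (1 - ρ) / 2 by ring]
  have hdenom : 1 ≤ 2 * (1 - (a - 1) / n) ∧ 2 * (1 - (a - 1) / n) ≤ 2 := by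
    have hn0 : (0 : ℝ) < n := by linarith
    have h0 : 0 ≤ (a - 1) / n := div_nonneg (by linarith) hn0.le
    have h1 : (a - 1) / n ≤ 1 / 2 := by rw [div_le_iff₀ hn0]; linarith
    constructor <;> linarith
  have hbase_le : 1 - (1 - ρ) / (2 * (1 - (a - 1) / n)) ≤ 1 - (1 - ρ) / 2 :=
    sub_le_sub_left (div_le_div_of_nonneg_left (by linarith) (by linarith) hdenom.2) 1
  have hbase_nonneg : 0 ≤ 1 - (1 - ρ) / (2 * (1 - (a - 1) / n)) := by
    have := div_le_self (by linarith : 0 ≤ 1 - ρ) hdenom.1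
    linarith
  calc (1 - (1 - ρ) / (2 * (1 - (a - 1) / (n : ℝ)))) ^ (a : ℝ) * f x
      ≤ (1 - (1 - ρ) / 2) ^ a * f x := by
        gcongr
        exact hf0 x
    _ ≤ noiseAvg ((1 - ρ) / 2) f x :=
        one_sub_rpow_mul_le_noiseAvg (by linarith) (by linarith) (fun y => (hf y).2) x
    _ = noiseOp n ρ f x := hnoise.symm
end
end
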